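/- Let θ ∈ ℝ^m, let A = {e₁, …, e_m} ⊆ ℝ^m be the set of standard basis vectors (deterministic allocations), and let F be the set of all implementable-with-payments rules f : ℝ^m → A. Then H(θ, F) = {θ} ∪ {θ' ∈ ℝ^m : for all indices i, j, if θ_i > θ_j then θ'_i − θ'_j < θ_i − θ_j}. That is, the harmless set for all deterministic implementable-with-payments mechanisms is the intersection, over all ordered pairs of assignments the agent is not indifferent between, of the open half-spaces bounded by the critical hyperplanes through θ and containing the origin, together with θ itself. -/

import Mathlib

/-!
Implementability forces weak monotonicity, `(f θ' - f θ) ⬝ᵥ (θ' - θ) ≥ 0`. For a deterministic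
rule with `f θ = eᵢ` and `f θ' = eⱼ` this reads `θⱼ - θᵢ ≤ θ'ⱼ - θ'ᵢ`, so reporting `θ'` can only
pay off at `θ` if `θ'` violates the constraint for the pair `(j, i)`. Conversely, if `θ' ≠ θ`
violates the constraint for `(i, j)`, the posted-price rule that allocates `eᵢ` at price
`c = θ'ᵢ - θ'ⱼ` exactly when `xᵢ - xⱼ > c` or `x = θ'`, and `eⱼ` for free otherwise, is
implementable and gives `eⱼ` to `θ` but `eᵢ` to `θ'`, a strict gain of `θᵢ - θⱼ` for `θ`.
-/

open Matrix BigOperators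

/-- An allocation rule is implementable-with-payments if there is a payment rule
making truthful reporting optimal. -/
def Implementable {m : ℕ} (f : (Fin m → ℝ) → (Fin m → ℝ)) : Prop :=
  ∃ p : (Fin m → ℝ) → ℝ, ∀ θ θ' : Fin m → ℝ, f θ ⬝ᵥ θ - p θ ≥ f θ' ⬝ᵥ θ - p θ'

theorem Implementable.dotProduct_sub_le {m : ℕ} {f : (Fin m → ℝ) → (Fin m → ℝ)}
    (hf : Implementable f) (θ θ' : Fin m → ℝ) :
    f θ' ⬝ᵥ θ - f θ ⬝ᵥ θ ≤ f θ' ⬝ᵥ θ' - f θ ⬝ᵥ θ' := by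
  obtain ⟨p, hp⟩ := hf
  linarith [hp θ θ', hp θ' θ]

theorem Implementable.single_dotProduct_le {m : ℕ} {f : (Fin m → ℝ) → (Fin m → ℝ)}
    (hf : Implementable f) {θ θ' : Fin m → ℝ} {i j : Fin m}
    (hi : f θ = Pi.single i 1) (hj : f θ' = Pi.single j 1)
    (h : ∀ i j : Fin m, θ i > θ j → θ' i - θ' j < θ i - θ j) :
    f θ' ⬝ᵥ θ ≤ f θ ⬝ᵥ θ := by
  have hmono := hf.dotProduct_sub_le θ θ'
  simp only [hi, hj, single_dotProduct, one_mul] at hmono ⊢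
  by_contra! hji
  linarith [h j i hji]

theorem implementable_ite {m : ℕ} (S : Set (Fin m → ℝ)) [DecidablePred (· ∈ S)]
    (a b : Fin m → ℝ) (c : ℝ) (hS : ∀ x ∈ S, c ≤ (a - b) ⬝ᵥ x)
    (hSc : ∀ x ∉ S, (a - b) ⬝ᵥ x ≤ c) :
    Implementable fun x => if x ∈ S then a else b := by
  refine ⟨fun x => if x ∈ S then c else 0, fun x y => ?_⟩
  have hgain := sub_dotProduct a b x
  by_cases hx : x ∈ S
  · have := hS x hx
    by_cases hy : y ∈ S <;> simp only [hx, hy, if_true, if_false] <;> linarith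
  · have := hSc x hx
    by_cases hy : y ∈ S <;> simp only [hx, hy, if_true, if_false] <;> linarith

theorem exists_implementable_single_dotProduct_lt {m : ℕ} {θ θ' : Fin m → ℝ} {i j : Fin m}
    (hne : θ' ≠ θ) (hij : θ j < θ i) (hviol : θ i - θ j ≤ θ' i - θ' j) :
    ∃ f : (Fin m → ℝ) → (Fin m → ℝ), (∀ x, ∃ k : Fin m, f x = Pi.single k 1) ∧
      Implementable f ∧ f θ ⬝ᵥ θ < f θ' ⬝ᵥ θ := by
  classical
  set c := θ' i - θ' j
  let S : Set (Fin m → ℝ) := {x | c < x i - x j ∨ x = θ'}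
  have hgain : ∀ x, (Pi.single i 1 - Pi.single j 1 : Fin m → ℝ) ⬝ᵥ x = x i - x j := by
    intro x
    simp only [sub_dotProduct, single_dotProduct, one_mul]
  have hθ : θ ∉ S := by
    rintro (hlt | rfl)
    · linarith
    · exact hne rfl
  refine ⟨fun x => if x ∈ S then Pi.single i 1 else Pi.single j 1, fun x => ?_, ?_, ?_⟩
  · by_cases hx : x ∈ S
    · exact ⟨i, if_pos hx⟩
    · exact ⟨j, if_neg hx⟩
  · refine implementable_ite S _ _ c (fun x hx => ?_) (fun x hx => ?_) <;> rw [hgain]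
    · rcases hx with hlt | rfl
      exacts [hlt.le, le_rfl]
    · exact not_lt.mp fun hlt => hx (Or.inl hlt)
  · have hθ' : θ' ∈ S := Or.inr rfl
    simpa only [if_neg hθ, if_pos hθ', single_dotProduct, one_mul] using hij

/-- Theorem 2: the harmless set for all deterministic implementable-with-payments
rules (whose allocations are standard basis vectors) is `θ` together with the
intersection of the open half-spaces below the critical hyperplanes through `θ`. -/
theorem harmless_deterministic {m : ℕ} (θ : Fin m → ℝ) :
    {θ' : Fin m → ℝ | ∀ f : (Fin m → ℝ) → (Fin m → ℝ),
        (∀ x, ∃ i : Fin m, f x = Pi.single i (1 : ℝ)) → Implementable f →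
        f θ ⬝ᵥ θ ≥ f θ' ⬝ᵥ θ} =
    {θ} ∪ {θ' : Fin m → ℝ | ∀ i j : Fin m, θ i > θ j → θ' i - θ' j < θ i - θ j} := by
  ext θ'
  simp only [Set.mem_ofPred_eq, Set.mem_union, Set.mem_singleton_iff]
  refine ⟨fun hharmless => ?_, ?_⟩
  · by_contra! hout
    obtain ⟨hne, i, j, hij, hviol⟩ := hout
    obtain ⟨f, hdet, hf, hlt⟩ := exists_implementable_single_dotProduct_lt hne hij hviol
    exact (hharmless f hdet hf).not_gt hlt
  · rintro (rfl | hcone) f hdet hf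
    · exact le_rfl
    · obtain ⟨i, hi⟩ := hdet θ
      obtain ⟨j, hj⟩ := hdet θ'
      exact hf.single_dotProduct_le hi hj hcone
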